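/- arXiv:1005.4098 — 2 statements merged into one kernel-verified Lean document; each statement's English description precedes it below -/
import Mathlib

section
/- Fix s > 0 and let h(r,a) = (a/√(2πr³))·exp(−a²/(2r)). Suppose w : [0,s)×(0,∞) → ℝ is C^{1,2} and satisfies −∂w/∂t + f''(t)·a·w = (1/2)·∂²w/∂a², where f : [0,s] → ℝ is C². Define v(t,a) := w(t,a)/h(s−t,a). Then v satisfies −∂v/∂t + f''(t)·a·v = (1/2)·∂²v/∂a² + (1/a − a/(s−t))·∂v/∂a on [0,s)×(0,∞). -/
/-!
Write `v = w φ` with `φ(t, a) = 1 / h(s - t, a) = √(2π r³) / a · exp (a² / (2r))`, `r = s - t`.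
The logarithmic derivatives of `φ` are `g = -1/a + a/r` in `a` and `(g² - ∂ₐg) / 2` in `t`; this
relation is the heat equation `∂ᵣh = ½ ∂ₐ²h` for the first-passage density `h`, written for
`log h`. Given it, the product rule turns the equation for `w` into the one for `v`, with drift
`-g = 1/a - a/r` (Doob's h-transform).
-/

open Real

noncomputable def h (r a : ℝ) : ℝ := a / Real.sqrt (2 * Real.pi * r ^ 3) * Real.exp (-a ^ 2 / (2 * r))

open Filter Topology

noncomputable def hInv (r a : ℝ) : ℝ := √(2 * π * r ^ 3) / a * exp (a ^ 2 / (2 * r))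

theorem inv_h (r a : ℝ) : (h r a)⁻¹ = hInv r a := by
  rw [h, hInv, mul_inv, inv_div, ← exp_neg, neg_div, neg_neg]

theorem hasDerivAt_hInv_left {r a : ℝ} (hr : 0 < r) (ha : a ≠ 0) :
    HasDerivAt (fun r' => hInv r' a) (hInv r a * (3 / (2 * r) - a ^ 2 / (2 * r ^ 2))) r := by
  have hX : 0 < 2 * π * r ^ 3 := by positivity
  have hcube : HasDerivAt (fun r' => 2 * π * r' ^ 3) (2 * π * (3 * r ^ 2)) r := by
    simpa using (hasDerivAt_pow 3 r).const_mul (2 * π)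
  have hexpo : HasDerivAt (fun r' => a ^ 2 / (2 * r'))
      ((0 * (2 * r) - a ^ 2 * (2 * 1)) / (2 * r) ^ 2) r :=
    (hasDerivAt_const r (a ^ 2)).fun_div ((hasDerivAt_id' r).const_mul 2) (by positivity)
  refine (((hcube.sqrt hX.ne').div_const a).fun_mul hexpo.exp).congr_deriv ?_
  have hS : √(2 * π * r ^ 3) ^ 2 = 2 * π * r ^ 3 := sq_sqrt hX.le
  have hS0 : √(2 * π * r ^ 3) ≠ 0 := (sqrt_pos.mpr hX).ne'
  unfold hInv
  field_simp
  linear_combination -3 * r * hS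

theorem hasDerivAt_hInv_right (r : ℝ) {a : ℝ} (ha : a ≠ 0) :
    HasDerivAt (hInv r) (hInv r a * (-1 / a + a / r)) a := by
  have hexpo : HasDerivAt (fun a' => a' ^ 2 / (2 * r)) (2 * a / (2 * r)) a := by
    simpa using (hasDerivAt_pow 2 a).div_const (2 * r)
  refine (((hasDerivAt_inv ha).const_mul √(2 * π * r ^ 3)).fun_mul hexpo.exp).congr_deriv ?_
  unfold hInv
  field_simp

theorem pde_mul_of_logDeriv {v w φ : ℝ → ℝ → ℝ} {g : ℝ → ℝ} {c t a g' : ℝ}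
    (hv : v = fun t a => w t a * φ t a)
    (hwt : DifferentiableAt ℝ (fun t' => w t' a) t)
    (hwa : ∀ᶠ a' in 𝓝 a, DifferentiableAt ℝ (w t) a')
    (hwaa : DifferentiableAt ℝ (deriv (w t)) a)
    (hφt : HasDerivAt (fun t' => φ t' a) (φ t a * ((g a ^ 2 - g') / 2)) t)
    (hφa : ∀ᶠ a' in 𝓝 a, HasDerivAt (φ t) (φ t a' * g a') a')
    (hg : HasDerivAt g g' a)
    (hpde : -deriv (fun t' => w t' a) t + c * w t a = 1 / 2 * deriv (deriv (w t)) a) :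
    -deriv (fun t' => v t' a) t + c * v t a =
      1 / 2 * deriv (deriv (v t)) a - g a * deriv (v t) a := by
  have hvt : HasDerivAt (fun t' => v t' a)
      (deriv (fun t' => w t' a) t * φ t a + w t a * (φ t a * ((g a ^ 2 - g') / 2))) t := by
    subst hv
    exact hwt.hasDerivAt.fun_mul hφt
  have hva : ∀ᶠ a' in 𝓝 a, HasDerivAt (v t)
      (deriv (w t) a' * φ t a' + w t a' * (φ t a' * g a')) a' := by
    filter_upwards [hwa, hφa] with a' hwa' hφa'
    subst hv
    exact hwa'.hasDerivAt.fun_mul hφa'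
  have hvaa : HasDerivAt (deriv (v t))
      (deriv (deriv (w t)) a * φ t a + deriv (w t) a * (φ t a * g a) +
        (deriv (w t) a * (φ t a * g a) + w t a * (φ t a * g a * g a + φ t a * g'))) a := by
    have hφa₀ := hφa.self_of_nhds
    refine ((hwaa.hasDerivAt.mul hφa₀).add
      (hwa.self_of_nhds.hasDerivAt.mul (hφa₀.mul hg))).congr_of_eventuallyEq ?_
    filter_upwards [hva] with a' hva' using hva'.deriv
  rw [hvt.deriv, hva.self_of_nhds.deriv, hvaa.deriv, hv]
  linear_combination φ t a * hpde

theorem stmt_3_general (s : ℝ) (f : ℝ → ℝ) (w : ℝ → ℝ → ℝ)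
    (hwt : ∀ t a, t ∈ Set.Ico 0 s → 0 < a → DifferentiableAt ℝ (fun t' => w t' a) t)
    (hwa : ∀ t a, t ∈ Set.Ico 0 s → 0 < a → DifferentiableAt ℝ (fun a' => w t a') a)
    (hwaa : ∀ t a, t ∈ Set.Ico 0 s → 0 < a →
      DifferentiableAt ℝ (fun a' => deriv (fun a'' => w t a'') a') a)
    (hpde : ∀ t a, t ∈ Set.Ico 0 s → 0 < a →
      -deriv (fun t' => w t' a) t + deriv (deriv f) t * a * w t a =
        (1 / 2) * deriv (fun a' => deriv (fun a'' => w t a'') a') a)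
    (v : ℝ → ℝ → ℝ) (hv : ∀ t a, v t a = w t a / h (s - t) a) :
    ∀ t a, t ∈ Set.Ico 0 s → 0 < a →
      -deriv (fun t' => v t' a) t + deriv (deriv f) t * a * v t a =
        (1 / 2) * deriv (fun a' => deriv (fun a'' => v t a'') a') a +
          (1 / a - a / (s - t)) * deriv (fun a' => v t a') a := by
  intro t a ht ha
  have hr : 0 < s - t := sub_pos.mpr ht.2
  have hφt : HasDerivAt (fun t' => hInv (s - t') a)
      (hInv (s - t) a * (((-1 / a + a / (s - t)) ^ 2 - (1 / a ^ 2 + 1 / (s - t))) / 2)) t := by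
    refine ((hasDerivAt_hInv_left hr ha.ne').comp t ((hasDerivAt_id' t).const_sub s)).congr_deriv ?_
    field_simp
    ring
  have hg : HasDerivAt (fun a' => -1 / a' + a' / (s - t)) (1 / a ^ 2 + 1 / (s - t)) a := by
    refine (((hasDerivAt_inv ha.ne').const_mul (-1)).fun_add
      ((hasDerivAt_id' a).div_const (s - t))).congr_deriv ?_
    ring
  have key := pde_mul_of_logDeriv (v := v) (φ := fun t a => hInv (s - t) a)
    (c := deriv (deriv f) t * a)
    (funext₂ fun t a => by rw [hv, div_eq_mul_inv, inv_h]) (hwt t a ht ha)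
    (eventually_gt_nhds ha |>.mono fun a' ha' => hwa t a' ht ha') (hwaa t a ht ha) hφt
    (eventually_gt_nhds ha |>.mono fun a' ha' => hasDerivAt_hInv_right _ ha'.ne') hg
    (hpde t a ht ha)
  linear_combination key

theorem stmt_3 (s : ℝ) (hs : 0 < s) (f : ℝ → ℝ) (w : ℝ → ℝ → ℝ)
    (hf : ContDiff ℝ 2 f)
    (hwt : ∀ t a, t ∈ Set.Ico 0 s → 0 < a → DifferentiableAt ℝ (fun t' => w t' a) t)
    (hwa : ∀ t a, t ∈ Set.Ico 0 s → 0 < a → DifferentiableAt ℝ (fun a' => w t a') a)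
    (hwaa : ∀ t a, t ∈ Set.Ico 0 s → 0 < a →
      DifferentiableAt ℝ (fun a' => deriv (fun a'' => w t a'') a') a)
    (hpde : ∀ t a, t ∈ Set.Ico 0 s → 0 < a →
      -deriv (fun t' => w t' a) t + deriv (deriv f) t * a * w t a =
        (1 / 2) * deriv (fun a' => deriv (fun a'' => w t a'') a') a)
    (v : ℝ → ℝ → ℝ) (hv : ∀ t a, v t a = w t a / h (s - t) a) :
    ∀ t a, t ∈ Set.Ico 0 s → 0 < a →
      -deriv (fun t' => v t' a) t + deriv (deriv f) t * a * v t a =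
        (1 / 2) * deriv (fun a' => deriv (fun a'' => v t a'') a') a +
          (1 / a - a / (s - t)) * deriv (fun a' => v t a') a :=
  stmt_3_general s f w hwt hwa hwaa hpde v hv
end

section
/- Conversely, fix s > 0 and suppose v : [0,s)×(0,∞) → ℝ is C^{1,2} and satisfies the Bessel-bridge Cauchy equation −∂v/∂t + f''(t)·a·v = (1/2)·∂²v/∂a² + (1/a − a/(s−t))·∂v/∂a, where f is C². Then w(t,a) := v(t,a)·h(s−t,a), with h(r,a) = (a/√(2πr³))·exp(−a²/(2r)), satisfies the Schrödinger-type equation −∂w/∂t + f''(t)·a·w = (1/2)·∂²w/∂a² on [0,s)×(0,∞). -/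
/-!
The heat kernel density `h` solves the backward heat equation `∂ᵣh = ½ ∂²ₐh`, and its
logarithmic derivative in `a` is `1/a - a/r`, exactly the drift of the Bessel-bridge equation.
Hence in `½ ∂²ₐ(v h) = ½ vₐₐ h + vₐ hₐ + ½ v hₐₐ` the middle term is `h` times the drift term
of the equation for `v`, and the last term cancels against the time derivative of `h(s - t, a)`.
-/

open Real

open Filter Topology

theorem deriv_deriv_mul {u g : ℝ → ℝ} {a : ℝ}
    (hu : ∀ᶠ x in 𝓝 a, DifferentiableAt ℝ u x) (hg : ∀ᶠ x in 𝓝 a, DifferentiableAt ℝ g x)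
    (hu' : DifferentiableAt ℝ (deriv u) a) (hg' : DifferentiableAt ℝ (deriv g) a) :
    deriv (deriv (u * g)) a =
      deriv (deriv u) a * g a + 2 * (deriv u a * deriv g a) + u a * deriv (deriv g) a := by
  have hderiv : deriv (u * g) =ᶠ[𝓝 a] deriv u * g + u * deriv g := by
    filter_upwards [hu, hg] with x hux hgx
    exact deriv_mul hux hgx
  have hua := hu.self_of_nhds
  have hga := hg.self_of_nhds
  rw [hderiv.deriv_eq, deriv_add (hu'.mul hga) (hua.mul hg'), deriv_mul hu' hga,
    deriv_mul hua hg']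
  ring

lemma hasDerivAt_h_time {r : ℝ} (hr : 0 < r) (a : ℝ) :
    HasDerivAt (fun r => h r a) ((a ^ 2 / r ^ 2 - 3 / r) / 2 * h r a) r := by
  have hc : 0 < 2 * π * r ^ 3 := by positivity
  have hsqrt := ((hasDerivAt_pow 3 r).const_mul (2 * π)).sqrt hc.ne'
  have hexp := (hasDerivAt_const r (-a ^ 2)).fun_div ((hasDerivAt_id' r).const_mul 2)
    (by positivity)
  refine (((hasDerivAt_const r a).fun_div hsqrt (sqrt_pos.2 hc).ne').mul hexp.exp).congr_deriv ?_
  have hsq := sq_sqrt hc.le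
  unfold h
  field_simp
  rw [hsq]
  ring

lemma hasDerivAt_h_space {r a : ℝ} (hr : 0 < r) (ha : a ≠ 0) :
    HasDerivAt (h r) ((1 / a - a / r) * h r a) a := by
  have hexp := (hasDerivAt_pow 2 a).fun_neg.div_const (2 * r)
  refine ((hasDerivAt_id' a |>.div_const _).mul hexp.exp).congr_deriv ?_
  unfold h
  field_simp
  ring

lemma hasDerivAt_deriv_h_space {r a : ℝ} (hr : 0 < r) (ha : a ≠ 0) :
    HasDerivAt (deriv (h r)) ((a ^ 2 / r ^ 2 - 3 / r) * h r a) a := by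
  have hderiv : deriv (h r) =ᶠ[𝓝 a] fun x => (1 / x - x / r) * h r x := by
    filter_upwards [isOpen_ne.mem_nhds ha] with x hx
    exact (hasDerivAt_h_space hr hx).deriv
  have hlog := ((hasDerivAt_const a 1).fun_div (hasDerivAt_id' a) ha).fun_sub
    ((hasDerivAt_id' a).div_const r)
  refine ((hlog.fun_mul (hasDerivAt_h_space hr ha)).congr_deriv ?_).congr_of_eventuallyEq hderiv
  field_simp
  ring

theorem stmt_4_general (s : ℝ) (f : ℝ → ℝ) (v : ℝ → ℝ → ℝ)
    (hvt : ∀ t a, t ∈ Set.Ico 0 s → 0 < a → DifferentiableAt ℝ (fun t' => v t' a) t)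
    (hva : ∀ t a, t ∈ Set.Ico 0 s → 0 < a → DifferentiableAt ℝ (fun a' => v t a') a)
    (hvaa : ∀ t a, t ∈ Set.Ico 0 s → 0 < a →
      DifferentiableAt ℝ (fun a' => deriv (fun a'' => v t a'') a') a)
    (hpde : ∀ t a, t ∈ Set.Ico 0 s → 0 < a →
      -deriv (fun t' => v t' a) t + deriv (deriv f) t * a * v t a =
        (1 / 2) * deriv (fun a' => deriv (fun a'' => v t a'') a') a +
          (1 / a - a / (s - t)) * deriv (fun a' => v t a') a)
    (w : ℝ → ℝ → ℝ) (hw : ∀ t a, w t a = v t a * h (s - t) a) :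
    ∀ t a, t ∈ Set.Ico 0 s → 0 < a →
      -deriv (fun t' => w t' a) t + deriv (deriv f) t * a * w t a =
        (1 / 2) * deriv (fun a' => deriv (fun a'' => w t a'') a') a := by
  intro t a ht ha
  have hr : 0 < s - t := sub_pos.2 ht.2
  have hw_time : deriv (fun t' => w t' a) t =
      deriv (fun t' => v t' a) t * h (s - t) a -
        v t a * ((a ^ 2 / (s - t) ^ 2 - 3 / (s - t)) / 2 * h (s - t) a) := by
    simp_rw [hw]
    rw [((hvt t a ht ha).hasDerivAt.fun_mul ((hasDerivAt_h_time hr a).comp_const_sub s t)).deriv]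
    ring
  have hw_space : deriv (fun a' => deriv (fun a'' => w t a'') a') a =
      deriv (fun a' => deriv (fun a'' => v t a'') a') a * h (s - t) a +
        2 * (deriv (fun a' => v t a') a * ((1 / a - a / (s - t)) * h (s - t) a)) +
        v t a * ((a ^ 2 / (s - t) ^ 2 - 3 / (s - t)) * h (s - t) a) := by
    have hwt : (fun a' => w t a') = v t * h (s - t) := funext (hw t)
    have hh' := hasDerivAt_deriv_h_space hr ha.ne'
    rw [hwt, deriv_deriv_mul ?_ ?_ (hvaa t a ht ha) hh'.differentiableAt,
      (hasDerivAt_h_space hr ha.ne').deriv, hh'.deriv]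
    all_goals filter_upwards [Ioi_mem_nhds ha] with b hb
    exacts [hva t b ht hb, (hasDerivAt_h_space hr hb.ne').differentiableAt]
  rw [hw_time, hw_space, hw]
  linear_combination h (s - t) a * hpde t a ht ha

theorem stmt_4 (s : ℝ) (hs : 0 < s) (f : ℝ → ℝ) (v : ℝ → ℝ → ℝ)
    (hf : ContDiff ℝ 2 f)
    (hvt : ∀ t a, t ∈ Set.Ico 0 s → 0 < a → DifferentiableAt ℝ (fun t' => v t' a) t)
    (hva : ∀ t a, t ∈ Set.Ico 0 s → 0 < a → DifferentiableAt ℝ (fun a' => v t a') a)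
    (hvaa : ∀ t a, t ∈ Set.Ico 0 s → 0 < a →
      DifferentiableAt ℝ (fun a' => deriv (fun a'' => v t a'') a') a)
    (hpde : ∀ t a, t ∈ Set.Ico 0 s → 0 < a →
      -deriv (fun t' => v t' a) t + deriv (deriv f) t * a * v t a =
        (1 / 2) * deriv (fun a' => deriv (fun a'' => v t a'') a') a +
          (1 / a - a / (s - t)) * deriv (fun a' => v t a') a)
    (w : ℝ → ℝ → ℝ) (hw : ∀ t a, w t a = v t a * h (s - t) a) :
    ∀ t a, t ∈ Set.Ico 0 s → 0 < a →
      -deriv (fun t' => w t' a) t + deriv (deriv f) t * a * w t a =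
        (1 / 2) * deriv (fun a' => deriv (fun a'' => w t a'') a') a :=
  stmt_4_general s f v hvt hva hvaa hpde w hw
end
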